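/- Under the stated setting, assume conditions (3.3), (3.4), (3.5) hold for constants M, R, K, ω, δ > 0, and let k : ℝⁿ → ℝ be any locally bounded function with k(0) = 0. Then there exists r̃ > 0 such that: for every sampling schedule with MASP r̃, every measurable d : [0,∞) → D, and every solution (x,y) of the closed-loop system (3.7) with x(0)'Px(0) < R², one has x(t)'Px(t) < R² for all t ≥ 0. -/

import Mathlib

open Matrix MeasureTheory Set Filter

noncomputable section

/-- The `m × m` matrix with ones on the subdiagonal and zeros elsewhere. -/
def matA (m : ℕ) : Matrix (Fin m) (Fin m) ℝ :=
  Matrix.of fun i j => if (i : ℕ) = (j : ℕ) + 1 then 1 else 0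

/-- The vector `b = (1,0,…,0)'` as a plain function. -/
def vecbf (m : ℕ) : Fin m → ℝ := fun i => if (i : ℕ) = 0 then 1 else 0

/-- The vector `b = (1,0,…,0)'` in Euclidean space. -/
def vecb (m : ℕ) : EuclideanSpace ℝ (Fin m) := (WithLp.equiv 2 (Fin m → ℝ)).symm (vecbf m)

/-- View a Euclidean vector as a plain function. -/
def ef {m : ℕ} (x : EuclideanSpace ℝ (Fin m)) : Fin m → ℝ := x

/-- Matrix-vector multiplication on Euclidean space. -/
def mulVecE {m : ℕ} (M : Matrix (Fin m) (Fin m) ℝ) (x : EuclideanSpace ℝ (Fin m)) :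
    EuclideanSpace ℝ (Fin m) :=
  (WithLp.equiv 2 (Fin m → ℝ)).symm (M.mulVec (ef x))

/-- Euclidean inner product `x'y`. -/
def ip {m : ℕ} (x y : EuclideanSpace ℝ (Fin m)) : ℝ := ∑ i, x i * y i

/-- Quadratic form `x'Px`. -/
def qf {m : ℕ} (P : Matrix (Fin m) (Fin m) ℝ) (x : EuclideanSpace ℝ (Fin m)) : ℝ :=
  ip x (mulVecE P x)

/-- The saturation function `sat(s) = s / max(1,|s|)`. -/
def sat (s : ℝ) : ℝ := s / max 1 |s|

/-- The vector `c = -(A' + pb')⁻¹ (0,…,0,1)'`. -/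
def cvec (n : ℕ) (p : EuclideanSpace ℝ (Fin (n+1))) : EuclideanSpace ℝ (Fin (n+1)) :=
  (WithLp.equiv 2 (Fin (n+1) → ℝ)).symm
    (-((((matA (n+1))ᵀ + vecMulVec (ef p) (vecbf (n+1)))⁻¹).mulVec (Pi.single (Fin.last n) 1)))

/-- Condition (3.3): `x'P(Ax + f(d,x,u) + bu) < 0` whenever `d ∈ D`, `x'Px = R²` and
`|u - p'x| ≤ K|c'b|`. -/
def Cond33 {l n : ℕ} (D : Set (EuclideanSpace ℝ (Fin l)))
    (f : EuclideanSpace ℝ (Fin l) → EuclideanSpace ℝ (Fin (n+1)) → ℝ → EuclideanSpace ℝ (Fin (n+1)))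
    (P : Matrix (Fin (n+1)) (Fin (n+1)) ℝ) (p : EuclideanSpace ℝ (Fin (n+1))) (R K : ℝ) : Prop :=
  ∀ d ∈ D, ∀ x : EuclideanSpace ℝ (Fin (n+1)), ∀ u : ℝ,
    qf P x = R ^ 2 → |u - ip p x| ≤ K * |ip (cvec n p) (vecb (n+1))| →
      ip x (mulVecE P (mulVecE (matA (n+1)) x + f d x u + u • vecb (n+1))) < 0

/-- Condition (3.4): `|g(d,x,u) + c'f(d,x,u)| < K(c'b)²` whenever `d ∈ D`, `x'Px ≤ R²` and
`|u - p'x| ≤ K|c'b|`. -/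
def Cond34 {l n : ℕ} (D : Set (EuclideanSpace ℝ (Fin l)))
    (f : EuclideanSpace ℝ (Fin l) → EuclideanSpace ℝ (Fin (n+1)) → ℝ → EuclideanSpace ℝ (Fin (n+1)))
    (g : EuclideanSpace ℝ (Fin l) → EuclideanSpace ℝ (Fin (n+1)) → ℝ → ℝ)
    (P : Matrix (Fin (n+1)) (Fin (n+1)) ℝ) (p : EuclideanSpace ℝ (Fin (n+1))) (R K : ℝ) : Prop :=
  ∀ d ∈ D, ∀ x : EuclideanSpace ℝ (Fin (n+1)), ∀ u : ℝ,
    qf P x ≤ R ^ 2 → |u - ip p x| ≤ K * |ip (cvec n p) (vecb (n+1))| →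
      |g d x u + ip (cvec n p) (f d x u)| < K * (ip (cvec n p) (vecb (n+1))) ^ 2

/-- Condition (3.5). -/
def Cond35 {l n : ℕ} (D : Set (EuclideanSpace ℝ (Fin l)))
    (f : EuclideanSpace ℝ (Fin l) → EuclideanSpace ℝ (Fin (n+1)) → ℝ → EuclideanSpace ℝ (Fin (n+1)))
    (g : EuclideanSpace ℝ (Fin l) → EuclideanSpace ℝ (Fin (n+1)) → ℝ → ℝ)
    (P : Matrix (Fin (n+1)) (Fin (n+1)) ℝ) (p : EuclideanSpace ℝ (Fin (n+1)))
    (M R K ω δ : ℝ) : Prop :=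
  ∀ d ∈ D, ∀ x : EuclideanSpace ℝ (Fin (n+1)), ∀ z : ℝ,
    qf P x ≤ R ^ 2 → ω * |z| ≤ 1 →
      ∀ u : ℝ, u = ip p x - K * ip (cvec n p) (vecb (n+1)) * ω * z →
        z * (M * g d x u + M * ip (cvec n p) (f d x u)
              - K * ip (cvec n p) (vecb (n+1)) * ω * ip (vecb (n+1)) (mulVecE P x))
          ≤ (M * K * (ip (cvec n p) (vecb (n+1))) ^ 2 * ω - δ) * z ^ 2
            - ip x (mulVecE P
                (mulVecE (matA (n+1) + vecMulVec (vecbf (n+1)) (ef p) + δ • 1) x + f d x u))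

/-- A sampling schedule with maximum allowable sampling period `r`. -/
def Sched (r : ℝ) (τ : ℕ → ℝ) : Prop :=
  τ 0 = 0 ∧ (∀ i, 0 < τ (i+1) - τ i) ∧ (∀ i, τ (i+1) - τ i ≤ r) ∧
    Tendsto τ atTop atTop

open Classical in
/-- The hybrid feedback `k̃` of (3.6). -/
def ktilde {n : ℕ} (k : EuclideanSpace ℝ (Fin (n+1)) → ℝ)
    (P : Matrix (Fin (n+1)) (Fin (n+1)) ℝ) (p : EuclideanSpace ℝ (Fin (n+1)))
    (R K ω : ℝ) (x : EuclideanSpace ℝ (Fin (n+1))) (y : ℝ) : ℝ :=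
  if R ^ 2 ≤ qf P x then k x
  else ip p x - K * ip (cvec n p) (vecb (n+1)) * sat (ω * (y + ip (cvec n p) x))

/-- A (locally absolutely continuous) solution of the closed-loop sampled-data system (3.7)
with feedback `fb`, sampling times `τ` and disturbance `d`. -/
def Sol37 {l n : ℕ}
    (f : EuclideanSpace ℝ (Fin l) → EuclideanSpace ℝ (Fin (n+1)) → ℝ → EuclideanSpace ℝ (Fin (n+1)))
    (g : EuclideanSpace ℝ (Fin l) → EuclideanSpace ℝ (Fin (n+1)) → ℝ → ℝ)
    (fb : EuclideanSpace ℝ (Fin (n+1)) → ℝ → ℝ) (τ : ℕ → ℝ)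
    (d : ℝ → EuclideanSpace ℝ (Fin l))
    (x : ℝ → EuclideanSpace ℝ (Fin (n+1))) (y : ℝ → ℝ) : Prop :=
  ∃ (x' : ℝ → EuclideanSpace ℝ (Fin (n+1))) (y' : ℝ → ℝ),
    (∀ T : ℝ, IntervalIntegrable x' volume 0 T) ∧
    (∀ T : ℝ, IntervalIntegrable y' volume 0 T) ∧
    (∀ t : ℝ, 0 ≤ t → x t = x 0 + ∫ s in (0:ℝ)..t, x' s) ∧
    (∀ t : ℝ, 0 ≤ t → y t = y 0 + ∫ s in (0:ℝ)..t, y' s) ∧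
    ∀ i : ℕ, ∀ᵐ t ∂(volume.restrict (Ico (τ i) (τ (i+1)))),
      x' t = mulVecE (matA (n+1)) (x t) + f (d t) (x t) (fb (x (τ i)) (y (τ i)))
          + fb (x (τ i)) (y (τ i)) • vecb (n+1) ∧
      y' t = x t (Fin.last n) + g (d t) (x t) (fb (x (τ i)) (y (τ i)))


/-!
If the state left the ellipsoid `x'Px < R²`, it would first reach its boundary at a time `T`
inside a sampling interval `(τᵢ, T]`. By compactness, (3.3) survives with a uniform margin `η > 0`:
`x'P(Ax + f + bu) ≤ -η` whenever `x'Px` is `η`-close to `R²` and `|u - p'x| < K|c'b| + η`.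
The held control is within `K|c'b|` of `p'x(τᵢ)`, and since the state moves at bounded speed over a
short sampling interval, it is within `K|c'b| + η` of `p'x(s)` on `[τᵢ, T]`. Hence `x'Pẋ ≤ -η` just
before `T`, and polarization, `x(T)'Px(T) - x(a)'Px(a) = ∫ₐᵀ (P(x(T) + x(a)))'ẋ`, turns this into a
strict decrease of `x'Px` on some `[a, T]` without differentiating the absolutely continuous path.
-/

open scoped RealInnerProductSpace

section Primitive

variable {E : Type*} [NormedAddCommGroup E] [NormedSpace ℝ E]

def IsPrimitiveOn (x w : ℝ → E) (a b : ℝ) : Prop :=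
  IntervalIntegrable w volume a b ∧ ∀ s ∈ Icc a b, x s = x a + ∫ t in a..s, w t

variable {x w : ℝ → E} {a b r s B : ℝ}

lemma ae_mem_Icc_of_ae_mem_Ioo {p : ℝ → Prop} (h : ∀ᵐ t, t ∈ Ioo a b → p t) :
    ∀ᵐ t, t ∈ Icc a b → p t := by
  filter_upwards [h, Measure.ae_ne volume a, Measure.ae_ne volume b] with t ht hta htb hmem
  exact ht ⟨hmem.1.lt_of_ne' hta, hmem.2.lt_of_ne htb⟩

namespace IsPrimitiveOn

lemma sub_eq_integral (hx : IsPrimitiveOn x w a b) (hr : r ∈ Icc a b) (hs : s ∈ Icc a b) :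
    x s - x r = ∫ t in r..s, w t := by
  have hw : ∀ c ∈ Icc a b, IntervalIntegrable w volume a c := fun c hc =>
    hx.1.mono_set (uIcc_subset_uIcc left_mem_uIcc (mem_uIcc_of_le hc.1 hc.2))
  rw [hx.2 s hs, hx.2 r hr, add_sub_add_left_eq_sub,
    intervalIntegral.integral_interval_sub_left (hw s hs) (hw r hr)]

lemma mono (hx : IsPrimitiveOn x w a b) {a' b' : ℝ} (ha : a ≤ a') (hab : a' ≤ b') (hb : b' ≤ b) :
    IsPrimitiveOn x w a' b' :=
  ⟨hx.1.mono_set (uIcc_subset_uIcc (mem_uIcc_of_le ha (hab.trans hb))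
      (mem_uIcc_of_le (ha.trans hab) hb)),
    fun _ hs => eq_add_of_sub_eq' (hx.sub_eq_integral ⟨ha, hab.trans hb⟩
      ⟨ha.trans hs.1, hs.2.trans hb⟩)⟩

lemma continuousOn (hx : IsPrimitiveOn x w a b) : ContinuousOn x (Icc a b) := by
  exact ((continuousOn_const.add (intervalIntegral.continuousOn_primitive_interval' hx.1
    left_mem_uIcc)).mono Icc_subset_uIcc).congr hx.2

lemma norm_sub_le_of_norm_le (hx : IsPrimitiveOn x w a b) (hB : ∀ᵐ t, t ∈ Ioo a b → ‖w t‖ ≤ B)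
    (hr : r ∈ Icc a b) (hs : s ∈ Icc a b) (hrs : r ≤ s) : ‖x s - x r‖ ≤ B * (s - r) := by
  rw [hx.sub_eq_integral hr hs, ← abs_of_nonneg (sub_nonneg.2 hrs)]
  refine intervalIntegral.norm_integral_le_of_norm_le_const_ae ?_
  filter_upwards [ae_mem_Icc_of_ae_mem_Ioo hB] with t ht htrs
  rw [uIoc_of_le hrs] at htrs
  exact ht ⟨hr.1.trans htrs.1.le, htrs.2.trans hs.2⟩

end IsPrimitiveOn

end Primitive

section QuadraticForm

variable {E : Type*} [NormedAddCommGroup E] [InnerProductSpace ℝ E] {L : E →L[ℝ] E}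

lemma inner_map_self_sub_inner_map_self (hL : (L : E →ₗ[ℝ] E).IsSymmetric) (x y : E) :
    ⟪x, L x⟫ - ⟪y, L y⟫ = ⟪L (x + y), x - y⟫ := by
  have hxy : ⟪L x, y⟫ = ⟪L y, x⟫ := by rw [real_inner_comm]; exact (hL y x).symm
  simp only [map_add, inner_add_left, inner_sub_right, real_inner_comm (L x) x,
    real_inner_comm (L y) y, hxy]
  ring

theorem isBounded_setOf_inner_map_self_le [FiniteDimensional ℝ E]
    (hL : ∀ x ≠ 0, 0 < ⟪x, L x⟫) (c : ℝ) : Bornology.IsBounded {x | ⟪x, L x⟫ ≤ c} := by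
  obtain ⟨m, hm, hmin⟩ := (isCompact_sphere (0 : E) 1).exists_forall_le'
    (by fun_prop : Continuous fun x => ⟪x, L x⟫).continuousOn
    fun y hy => hL y (ne_zero_of_mem_sphere one_ne_zero ⟨y, hy⟩)
  have hcoer : ∀ x, m * ‖x‖ ^ 2 ≤ ⟪x, L x⟫ := by
    intro x
    rcases eq_or_ne x 0 with rfl | hx
    · simp
    have hnx : ‖x‖ ≠ 0 := norm_ne_zero_iff.2 hx
    have h := hmin (‖x‖⁻¹ • x) (by simp [norm_smul, hnx])
    rw [map_smul, inner_smul_left, inner_smul_right] at h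
    have : ⟪x, L x⟫ = ‖x‖ ^ 2 * (‖x‖⁻¹ * (‖x‖⁻¹ * ⟪x, L x⟫)) := by field_simp
    rw [this]
    simp only [conj_trivial] at h
    nlinarith [sq_nonneg ‖x‖]
  refine isBounded_iff_forall_norm_le.2 ⟨√(c / m), fun x hx => ?_⟩
  rw [← abs_norm]
  exact Real.abs_le_sqrt ((le_div_iff₀' hm).2 ((hcoer x).trans hx))

variable [CompleteSpace E] {x w : ℝ → E} {a b B η : ℝ}

theorem IsPrimitiveOn.inner_map_self_lt (hL : (L : E →ₗ[ℝ] E).IsSymmetric)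
    (hx : IsPrimitiveOn x w a b) (hab : a < b) (hη : 0 < η)
    (hw : ∀ᵐ s, s ∈ Ioo a b → ‖w s‖ ≤ B ∧ ⟪x s, L (w s)⟫ ≤ -η)
    (hsmall : ‖L‖ * B * (B * (b - a)) ≤ η) : ⟪x b, L (x b)⟫ < ⟪x a, L (x a)⟫ := by
  have hdiff : ⟪x b, L (x b)⟫ - ⟪x a, L (x a)⟫ = ∫ s in a..b, ⟪L (x b + x a), w s⟫ := by
    rw [inner_map_self_sub_inner_map_self hL,
      hx.sub_eq_integral (left_mem_Icc.2 hab.le) (right_mem_Icc.2 hab.le)]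
    exact ((innerSL ℝ (L (x b + x a))).intervalIntegral_comp_comm hx.1).symm
  have hpt : ∀ᵐ s, s ∈ Ioo a b → ⟪L (x b + x a), w s⟫ ≤ -η := by
    have hB := hw.mono fun s hs hmem => (hs hmem).1
    filter_upwards [hw] with s hs hmem
    obtain ⟨hws, hneg⟩ := hs hmem
    -- compare with the sign condition at `x s`: `x b + x a = 2 • x s + v` with `v` small
    set v := (x b - x s) - (x s - x a)
    have hs' := Ioo_subset_Icc_self hmem
    have hv : ‖v‖ ≤ B * (b - a) := by
      have h1 := hx.norm_sub_le_of_norm_le hB hs' (right_mem_Icc.2 hab.le) hmem.2.le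
      have h2 := hx.norm_sub_le_of_norm_le hB (left_mem_Icc.2 hab.le) hs' hmem.1.le
      calc ‖v‖ ≤ ‖x b - x s‖ + ‖x s - x a‖ := norm_sub_le _ _
        _ ≤ B * (b - a) := by linarith
    have hsplit : ⟪L (x b + x a), w s⟫ = 2 * ⟪x s, L (w s)⟫ + ⟪L v, w s⟫ := by
      have : x b + x a = (2 : ℝ) • x s + v := by simp only [v]; module
      rw [this, map_add, map_smul, inner_add_left, real_inner_smul_left]
      congr 2
      exact hL (x s) (w s)
    have herr : ⟪L v, w s⟫ ≤ η := calc
      ⟪L v, w s⟫ ≤ ‖L v‖ * ‖w s‖ := real_inner_le_norm _ _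
      _ ≤ ‖L‖ * ‖v‖ * B := mul_le_mul (L.le_opNorm v) hws (norm_nonneg _) (by positivity)
      _ ≤ ‖L‖ * (B * (b - a)) * B := by
          gcongr
          exact (norm_nonneg _).trans hws
      _ ≤ η := by linarith
    linarith
  have hint : ∫ s in a..b, ⟪L (x b + x a), w s⟫ ≤ ∫ _ in a..b, -η := by
    refine intervalIntegral.integral_mono_ae_restrict hab.le
      ⟨(innerSL ℝ (L (x b + x a))).integrable_comp hx.1.1,
        (innerSL ℝ (L (x b + x a))).integrable_comp hx.1.2⟩ intervalIntegrable_const ?_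
    rw [EventuallyLE, ae_restrict_iff' measurableSet_Icc]
    exact ae_mem_Icc_of_ae_mem_Ioo hpt
  rw [intervalIntegral.integral_const, smul_eq_mul] at hint
  have := mul_pos (sub_pos.2 hab) hη
  linarith

end QuadraticForm

theorem IsCompact.exists_pos_forall_le_neg_of_lt {X : Type*} [TopologicalSpace X] {S : Set X}
    (hS : IsCompact S) {φ ψ : X → ℝ} (hφ : ContinuousOn φ S) (hψ : ContinuousOn ψ S)
    (h : ∀ q ∈ S, φ q ≤ 0 → ψ q < 0) : ∃ η > 0, ∀ q ∈ S, φ q < η → ψ q ≤ -η := by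
  obtain ⟨η, hη, hle⟩ := hS.exists_forall_le' (f := fun q => max (φ q) (-ψ q))
    (hφ.sup hψ.neg) (a := 0) fun q hq => by
      by_contra! hq'
      exact (h q hq (le_of_max_le_left hq')).not_ge (neg_nonpos.1 (le_of_max_le_right hq'))
  refine ⟨η, hη, fun q hq hφq => ?_⟩
  linarith [le_max_iff.1 (hle q hq) |>.resolve_left hφq.not_ge]

theorem exists_first_le_of_continuousOn {g : ℝ → ℝ} {a t c : ℝ} (hat : a ≤ t)
    (hg : ContinuousOn g (Icc a t)) (ha : g a < c) (ht : c ≤ g t) :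
    ∃ T ∈ Ioc a t, c ≤ g T ∧ ∀ s ∈ Ico a T, g s < c := by
  have hS : IsCompact (Icc a t ∩ g ⁻¹' Ici c) := isCompact_Icc.of_isClosed_subset
    (hg.preimage_isClosed_of_isClosed isClosed_Icc isClosed_Ici) inter_subset_left
  obtain ⟨T, ⟨hTI, hTc⟩, hTmin⟩ := hS.exists_isLeast ⟨t, ⟨hat, le_rfl⟩, ht⟩
  refine ⟨T, ⟨hTI.1.lt_of_ne ?_, hTI.2⟩, hTc, fun s hs => ?_⟩
  · rintro rfl; exact hTc.not_gt ha
  · by_contra! hcs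
    exact (hTmin ⟨⟨hs.1, hs.2.le.trans hTI.2⟩, hcs⟩).not_gt hs.2

theorem exists_forall_Ioo_lt_of_continuousOn {g : ℝ → ℝ} {a b c : ℝ} (hab : a < b)
    (hg : ContinuousOn g (Icc a b)) (hc : c < g b) : ∃ a' ∈ Ico a b, ∀ s ∈ Ioo a' b, c < g s := by
  have hev := (hg b (right_mem_Icc.2 hab.le)).eventually_const_lt hc
  rw [nhdsWithin_Icc_eq_nhdsLE hab] at hev
  obtain ⟨l, hl, hsub⟩ := mem_nhdsLT_iff_exists_Ioo_subset.1
    (nhdsWithin_mono b Iio_subset_Iic_self hev)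
  exact ⟨max a l, ⟨le_max_left _ _, max_lt hab hl⟩, fun s hs =>
    hsub ⟨(le_max_right _ _).trans_lt hs.1, hs.2⟩⟩

section Bridge

variable {m : ℕ}

lemma ip_eq_inner (x y : EuclideanSpace ℝ (Fin m)) : ip x y = ⟪x, y⟫ := by
  simp [ip, PiLp.inner_apply, mul_comm]

lemma mulVecE_eq_toEuclideanCLM (M : Matrix (Fin m) (Fin m) ℝ) (x : EuclideanSpace ℝ (Fin m)) :
    mulVecE M x = toEuclideanCLM (𝕜 := ℝ) M x := rfl

lemma qf_eq_inner (P : Matrix (Fin m) (Fin m) ℝ) (x : EuclideanSpace ℝ (Fin m)) :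
    qf P x = ⟪x, toEuclideanCLM (𝕜 := ℝ) P x⟫ := by
  rw [qf, ip_eq_inner, mulVecE_eq_toEuclideanCLM]

@[fun_prop]
lemma continuous_qf (P : Matrix (Fin m) (Fin m) ℝ) : Continuous (qf P) := by
  simp only [funext (qf_eq_inner P)]
  fun_prop

lemma inner_toEuclideanCLM_self_pos {P : Matrix (Fin m) (Fin m) ℝ} (hP : P.PosDef)
    {x : EuclideanSpace ℝ (Fin m)} (hx : x ≠ 0) : 0 < ⟪x, toEuclideanCLM (𝕜 := ℝ) P x⟫ := by
  rw [inner_toEuclideanCLM]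
  simpa using hP.dotProduct_mulVec_pos (x := WithLp.ofLp x) (by simpa using hx)

lemma abs_ip_le (x y : EuclideanSpace ℝ (Fin m)) : |ip x y| ≤ ‖x‖ * ‖y‖ := by
  rw [ip_eq_inner]
  exact abs_real_inner_le_norm x y

lemma abs_ip_sub_ip_le (p y z : EuclideanSpace ℝ (Fin m)) :
    |ip p y - ip p z| ≤ ‖p‖ * ‖y - z‖ := by
  rw [ip_eq_inner, ip_eq_inner, ← inner_sub_right, ← ip_eq_inner]
  exact abs_ip_le p (y - z)

end Bridge

namespace Sched

variable {r : ℝ} {τ : ℕ → ℝ}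

lemma strictMono (hτ : Sched r τ) : StrictMono τ :=
  strictMono_nat_of_lt_succ fun i => sub_pos.1 (hτ.2.1 i)

lemma nonneg (hτ : Sched r τ) (i : ℕ) : 0 ≤ τ i := by
  simpa [hτ.1] using hτ.strictMono.monotone (Nat.zero_le i)

lemma exists_mem_Ioc (hτ : Sched r τ) {t : ℝ} (ht : 0 < t) : ∃ i, t ∈ Ioc (τ i) (τ (i+1)) := by
  classical
  have hex : ∃ j, t ≤ τ j := (hτ.2.2.2.eventually_ge_atTop t).exists
  obtain ⟨i, hi⟩ := Nat.exists_eq_succ_of_ne_zero (n := Nat.find hex) fun h => by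
    have := Nat.find_spec hex
    rw [h, hτ.1] at this
    exact this.not_gt ht
  refine ⟨i, not_le.1 (Nat.find_min hex (hi ▸ i.lt_succ_self)), ?_⟩
  simpa [hi] using Nat.find_spec hex

end Sched

lemma isBounded_setOf_qf_le {m : ℕ} {P : Matrix (Fin m) (Fin m) ℝ} (hP : P.PosDef) (c : ℝ) :
    Bornology.IsBounded {x | qf P x ≤ c} := by
  simpa only [qf_eq_inner] using
    isBounded_setOf_inner_map_self_le (fun _ hx => inner_toEuclideanCLM_self_pos hP hx) c

lemma abs_sat_le_one (s : ℝ) : |sat s| ≤ 1 := by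
  have h : (0 : ℝ) < max 1 |s| := lt_max_of_lt_left one_pos
  rw [sat, abs_div, abs_of_pos h, div_le_one h]
  exact le_max_right 1 |s|

section ClosedLoop

variable {l n : ℕ} {D : Set (EuclideanSpace ℝ (Fin l))}
  {f : EuclideanSpace ℝ (Fin l) → EuclideanSpace ℝ (Fin (n+1)) → ℝ → EuclideanSpace ℝ (Fin (n+1))}
  {P : Matrix (Fin (n+1)) (Fin (n+1)) ℝ} {p : EuclideanSpace ℝ (Fin (n+1))} {R K : ℝ}

def openLoopField
    (f : EuclideanSpace ℝ (Fin l) → EuclideanSpace ℝ (Fin (n+1)) → ℝ → EuclideanSpace ℝ (Fin (n+1)))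
    (d : EuclideanSpace ℝ (Fin l)) (x : EuclideanSpace ℝ (Fin (n+1))) (u : ℝ) :
    EuclideanSpace ℝ (Fin (n+1)) :=
  mulVecE (matA (n+1)) x + f d x u + u • vecb (n+1)

lemma continuous_openLoopField
    (hf : Continuous fun q : EuclideanSpace ℝ (Fin l) × EuclideanSpace ℝ (Fin (n+1)) × ℝ =>
      f q.1 q.2.1 q.2.2) :
    Continuous fun q : EuclideanSpace ℝ (Fin l) × EuclideanSpace ℝ (Fin (n+1)) × ℝ =>
      openLoopField f q.1 q.2.1 q.2.2 :=
  (((toEuclideanCLM (𝕜 := ℝ) (matA (n+1))).continuous.comp continuous_snd.fst).add hf).add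
    (continuous_snd.snd.smul continuous_const)

lemma Sol37.exists_isPrimitiveOn
    {g : EuclideanSpace ℝ (Fin l) → EuclideanSpace ℝ (Fin (n+1)) → ℝ → ℝ} {fb : EuclideanSpace ℝ (Fin (n+1)) → ℝ → ℝ} {τ : ℕ → ℝ} {d : ℝ → EuclideanSpace ℝ (Fin l)}
    {x : ℝ → EuclideanSpace ℝ (Fin (n+1))} {y : ℝ → ℝ} (hsol : Sol37 f g fb τ d x y) :
    ∃ w : ℝ → EuclideanSpace ℝ (Fin (n+1)), (∀ t, 0 ≤ t → IsPrimitiveOn x w 0 t) ∧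
      ∀ i, ∀ᵐ s, s ∈ Ico (τ i) (τ (i+1)) →
        w s = openLoopField f (d s) (x s) (fb (x (τ i)) (y (τ i))) := by
  obtain ⟨w, _, hw, _, hx, _, hode⟩ := hsol
  exact ⟨w, fun t _ => ⟨hw t, fun s hs => hx s hs.1⟩, fun i =>
    (ae_restrict_iff' measurableSet_Ico).1 ((hode i).mono fun _ hs => hs.1)⟩

lemma abs_ktilde_sub_le (k : EuclideanSpace ℝ (Fin (n+1)) → ℝ) (hK : 0 ≤ K) {ω y : ℝ}
    {x : EuclideanSpace ℝ (Fin (n+1))} (hx : qf P x < R ^ 2) :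
    |ktilde k P p R K ω x y - ip p x| ≤ K * |ip (cvec n p) (vecb (n+1))| := by
  rw [ktilde, if_neg hx.not_ge, sub_sub_cancel_left, abs_neg, abs_mul, abs_mul, abs_of_nonneg hK]
  exact mul_le_of_le_one_right (by positivity) (abs_sat_le_one _)

variable (hDc : IsCompact D)
  (hf : Continuous fun q : EuclideanSpace ℝ (Fin l) × EuclideanSpace ℝ (Fin (n+1)) × ℝ =>
    f q.1 q.2.1 q.2.2)
include hDc hf

theorem exists_norm_openLoopField_le (C U : ℝ) :
    ∃ B > 0, ∀ d ∈ D, ∀ x u, ‖x‖ ≤ C → |u| ≤ U → ‖openLoopField f d x u‖ ≤ B := by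
  obtain ⟨B, hB⟩ := (hDc.prod ((isCompact_closedBall (0 : EuclideanSpace ℝ (Fin (n+1))) C).prod
    (isCompact_Icc (a := -U) (b := U)))).exists_bound_of_continuousOn
      (continuous_openLoopField hf).continuousOn
  exact ⟨max B 1, by positivity, fun d hd x u hx hu =>
    (hB (d, x, u) ⟨hd, mem_closedBall_zero_iff.2 hx, abs_le.1 hu⟩).trans (le_max_left _ _)⟩

theorem Cond33.exists_margin (h33 : Cond33 D f P p R K) (C U : ℝ) :
    ∃ η > 0, ∀ d ∈ D, ∀ x u, ‖x‖ ≤ C → |u| ≤ U → |qf P x - R ^ 2| < η →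
      |u - ip p x| < K * |ip (cvec n p) (vecb (n+1))| + η →
      ip x (mulVecE P (openLoopField f d x u)) ≤ -η := by
  set cb := ip (cvec n p) (vecb (n+1))
  have hS := hDc.prod ((isCompact_closedBall (0 : EuclideanSpace ℝ (Fin (n+1))) C).prod
    (isCompact_Icc (a := -U) (b := U)))
  have hF := continuous_openLoopField hf
  obtain ⟨η, hη, hmargin⟩ := hS.exists_pos_forall_le_neg_of_lt
    (φ := fun q => max |qf P q.2.1 - R ^ 2| (|q.2.2 - ip p q.2.1| - K * |cb|))
    (ψ := fun q => ip q.2.1 (mulVecE P (openLoopField f q.1 q.2.1 q.2.2)))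
    (by simp only [ip_eq_inner]; fun_prop)
    (by simp only [ip_eq_inner, mulVecE_eq_toEuclideanCLM]; fun_prop)
    fun q hq hφ => h33 q.1 hq.1 q.2.1 q.2.2
      (sub_eq_zero.1 (abs_nonpos_iff.1 (le_of_max_le_left hφ)))
      (sub_nonpos.1 (le_of_max_le_right hφ))
  exact ⟨η, hη, fun d hd x u hx hu hqf hux => hmargin (d, x, u)
    ⟨hd, mem_closedBall_zero_iff.2 hx, abs_le.1 hu⟩ (max_lt hqf (by linarith))⟩

end ClosedLoop

section SampledStep

variable {l n : ℕ} {D : Set (EuclideanSpace ℝ (Fin l))}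
  {f : EuclideanSpace ℝ (Fin l) → EuclideanSpace ℝ (Fin (n+1)) → ℝ → EuclideanSpace ℝ (Fin (n+1))}
  {P : Matrix (Fin (n+1)) (Fin (n+1)) ℝ} {p : EuclideanSpace ℝ (Fin (n+1))} {R K C U η B : ℝ}

theorem qf_lt_sq_of_sampled_step (hP : P.IsHermitian) (hη : 0 < η)
    (hC : ∀ x, qf P x ≤ R ^ 2 → ‖x‖ ≤ C) (hU : ‖p‖ * C + K * |ip (cvec n p) (vecb (n+1))| ≤ U)
    (hmargin : ∀ d ∈ D, ∀ x u, ‖x‖ ≤ C → |u| ≤ U → |qf P x - R ^ 2| < η →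
      |u - ip p x| < K * |ip (cvec n p) (vecb (n+1))| + η →
      ip x (mulVecE P (openLoopField f d x u)) ≤ -η)
    (hbound : ∀ d ∈ D, ∀ x u, ‖x‖ ≤ C → |u| ≤ U → ‖openLoopField f d x u‖ ≤ B)
    {x w : ℝ → EuclideanSpace ℝ (Fin (n+1))} {d : ℝ → EuclideanSpace ℝ (Fin l)}
    (hdD : ∀ t, d t ∈ D) {u t₀ T : ℝ} (hT : t₀ < T)
    (hsmall₁ : ‖p‖ * (B * (T - t₀)) < η)
    (hsmall₂ : ‖toEuclideanCLM (𝕜 := ℝ) P‖ * B * (B * (T - t₀)) ≤ η)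
    (hx : IsPrimitiveOn x w t₀ T) (hode : ∀ᵐ s, s ∈ Ioo t₀ T → w s = openLoopField f (d s) (x s) u)
    (hu : |u - ip p (x t₀)| ≤ K * |ip (cvec n p) (vecb (n+1))|)
    (hin : ∀ s ∈ Ico t₀ T, qf P (x s) < R ^ 2) :
    qf P (x T) < R ^ 2 := by
  have hxC : ∀ s ∈ Ico t₀ T, ‖x s‖ ≤ C := fun s hs => hC _ (hin s hs).le
  have huU : |u| ≤ U := by
    have := mul_le_mul_of_nonneg_left (hxC t₀ ⟨le_rfl, hT⟩) (norm_nonneg p)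
    linarith [abs_sub_abs_le_abs_sub u (ip p (x t₀)), abs_ip_le p (x t₀)]
  have hB : 0 ≤ B := (norm_nonneg _).trans (hbound _ (hdD t₀) _ _ (hxC t₀ ⟨le_rfl, hT⟩) huU)
  have hwB : ∀ᵐ s, s ∈ Ioo t₀ T → ‖w s‖ ≤ B := by
    filter_upwards [hode] with s hs hmem
    rw [hs hmem]
    exact hbound _ (hdD s) _ _ (hxC s (Ioo_subset_Ico_self hmem)) huU
  have hux : ∀ s ∈ Icc t₀ T, |u - ip p (x s)| < K * |ip (cvec n p) (vecb (n+1))| + η := by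
    intro s hs
    have hlip := hx.norm_sub_le_of_norm_le hwB (left_mem_Icc.2 hT.le) hs hs.1
    have : ‖p‖ * ‖x s - x t₀‖ ≤ ‖p‖ * (B * (T - t₀)) := by
      gcongr
      exact hlip.trans (by gcongr; exact hs.2)
    linarith [abs_sub_le u (ip p (x t₀)) (ip p (x s)), abs_ip_sub_ip_le p (x s) (x t₀),
      abs_sub_comm (ip p (x t₀)) (ip p (x s))]
  by_contra! hRT
  obtain ⟨a, ha, hnear⟩ := exists_forall_Ioo_lt_of_continuousOn (g := fun s => qf P (x s))
    hT ((continuous_qf P).comp_continuousOn hx.continuousOn) (by linarith : R ^ 2 - η < qf P (x T))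
  have hdec := (hx.mono ha.1 ha.2.le le_rfl).inner_map_self_lt
    (L := toEuclideanCLM (𝕜 := ℝ) P) (B := B) (isSymmetric_toEuclideanLin_iff.2 hP) ha.2 hη ?_ ?_
  · rw [← qf_eq_inner, ← qf_eq_inner] at hdec
    linarith [hin a ha]
  · filter_upwards [hode, hwB] with s hs hsB hmem
    have hmem' : s ∈ Ioo t₀ T := ⟨ha.1.trans_lt hmem.1, hmem.2⟩
    refine ⟨hsB hmem', ?_⟩
    rw [hs hmem', ← mulVecE_eq_toEuclideanCLM, ← ip_eq_inner]
    refine hmargin _ (hdD s) _ _ (hxC s (Ioo_subset_Ico_self hmem')) huU ?_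
      (hux s (Ioo_subset_Icc_self hmem'))
    rw [abs_sub_lt_iff]
    constructor <;> linarith [hin s (Ioo_subset_Ico_self hmem'), hnear s hmem]
  · refine hsmall₂.trans' ?_
    gcongr
    exact ha.1

end SampledStep

theorem lemma_3_3_general (n l : ℕ)
    (D : Set (EuclideanSpace ℝ (Fin l))) (hDc : IsCompact D)
    (f : EuclideanSpace ℝ (Fin l) → EuclideanSpace ℝ (Fin (n+1)) → ℝ → EuclideanSpace ℝ (Fin (n+1)))
    (g : EuclideanSpace ℝ (Fin l) → EuclideanSpace ℝ (Fin (n+1)) → ℝ → ℝ)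
    (hfLip : LocallyLipschitz
      (fun q : EuclideanSpace ℝ (Fin l) × EuclideanSpace ℝ (Fin (n+1)) × ℝ => f q.1 q.2.1 q.2.2))
    (P : Matrix (Fin (n+1)) (Fin (n+1)) ℝ) (hP : P.PosDef)
    (p : EuclideanSpace ℝ (Fin (n+1)))
    (R K ω : ℝ) (hK : 0 < K)
    (h33 : Cond33 D f P p R K)
    (k : EuclideanSpace ℝ (Fin (n+1)) → ℝ) :
    ∃ rt : ℝ, 0 < rt ∧
      ∀ (τ : ℕ → ℝ) (d : ℝ → EuclideanSpace ℝ (Fin l))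
        (x : ℝ → EuclideanSpace ℝ (Fin (n+1))) (y : ℝ → ℝ),
        Sched rt τ → Measurable d → (∀ t : ℝ, d t ∈ D) →
        Sol37 f g (ktilde k P p R K ω) τ d x y →
        qf P (x 0) < R ^ 2 →
        ∀ t : ℝ, 0 ≤ t → qf P (x t) < R ^ 2 := by
  set cb := ip (cvec n p) (vecb (n+1))
  have hfc := hfLip.continuous
  obtain ⟨C, hC⟩ := isBounded_iff_forall_norm_le.1 (isBounded_setOf_qf_le hP (R ^ 2))
  obtain ⟨η, hη, hmargin⟩ := h33.exists_margin hDc hfc C (‖p‖ * C + K * |cb|)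
  obtain ⟨B, hB, hbound⟩ := exists_norm_openLoopField_le hDc hfc C (‖p‖ * C + K * |cb|)
  set Λ := ‖toEuclideanCLM (𝕜 := ℝ) P‖
  set rt := η / ((‖p‖ + Λ * B + 1) * B)
  have hrt : rt * ((‖p‖ + Λ * B + 1) * B) = η := div_mul_cancel₀ _ (by positivity)
  refine ⟨rt, by positivity, fun τ d x y hτ _ hdD hsol hx0 t ht => ?_⟩
  obtain ⟨w, hw, hode⟩ := hsol.exists_isPrimitiveOn
  by_contra! hxt
  obtain ⟨T, hT, hRT, hbefore⟩ := exists_first_le_of_continuousOn ht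
    ((continuous_qf P).comp_continuousOn (hw t ht).continuousOn) hx0 hxt
  obtain ⟨i, hi⟩ := hτ.exists_mem_Ioc hT.1
  have hτi := hτ.nonneg i
  have hlen : B * (T - τ i) ≤ B * rt := by gcongr; linarith [hi.2, hτ.2.2.1 i]
  refine (qf_lt_sq_of_sampled_step hP.1 hη hC le_rfl hmargin hbound hdD hi.1
    ?_ ?_ ((hw T hT.1.le).mono hτi hi.1.le le_rfl)
    ((hode i).mono fun _ hs hmem => hs ⟨hmem.1.le, hmem.2.trans_le hi.2⟩)
    (abs_ktilde_sub_le k hK.le (hbefore _ ⟨hτi, hi.1⟩))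
    fun s hs => hbefore s ⟨hτi.trans hs.1, hs.2⟩).not_ge hRT
  · have : 0 < Λ * B * (B * rt) + B * rt := by positivity
    nlinarith [mul_le_mul_of_nonneg_left hlen (norm_nonneg p)]
  · have : 0 ≤ ‖p‖ * (B * rt) + B * rt := by positivity
    nlinarith [mul_le_mul_of_nonneg_left hlen (by positivity : 0 ≤ Λ * B)]

/-- **Lemma 3.3.** Under conditions (3.3)–(3.5), for sufficiently small `r̃ > 0` the set
`{x : x'Px < R²}` is positively invariant for the closed-loop system (3.7). -/
theorem lemma_3_3 (n l : ℕ)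
    (D : Set (EuclideanSpace ℝ (Fin l))) (hD : D.Nonempty) (hDc : IsCompact D)
    (f : EuclideanSpace ℝ (Fin l) → EuclideanSpace ℝ (Fin (n+1)) → ℝ → EuclideanSpace ℝ (Fin (n+1)))
    (g : EuclideanSpace ℝ (Fin l) → EuclideanSpace ℝ (Fin (n+1)) → ℝ → ℝ)
    (hfLip : LocallyLipschitz
      (fun q : EuclideanSpace ℝ (Fin l) × EuclideanSpace ℝ (Fin (n+1)) × ℝ => f q.1 q.2.1 q.2.2))
    (hgLip : LocallyLipschitz
      (fun q : EuclideanSpace ℝ (Fin l) × EuclideanSpace ℝ (Fin (n+1)) × ℝ => g q.1 q.2.1 q.2.2))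
    (hf0 : ∀ d ∈ D, f d 0 0 = 0) (hg0 : ∀ d ∈ D, g d 0 0 = 0)
    (P : Matrix (Fin (n+1)) (Fin (n+1)) ℝ) (hP : P.PosDef)
    (p : EuclideanSpace ℝ (Fin (n+1)))
    (hneg : (-(P * (matA (n+1) + vecMulVec (vecbf (n+1)) (ef p))
        + ((matA (n+1))ᵀ + vecMulVec (ef p) (vecbf (n+1))) * P)).PosDef)
    (M R K ω δ : ℝ) (hM : 0 < M) (hR : 0 < R) (hK : 0 < K) (hω : 0 < ω) (hδ : 0 < δ)
    (h33 : Cond33 D f P p R K) (h34 : Cond34 D f g P p R K)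
    (h35 : Cond35 D f g P p M R K ω δ)
    (k : EuclideanSpace ℝ (Fin (n+1)) → ℝ) (hk0 : k 0 = 0)
    (hkb : ∀ C : ℝ, ∃ B : ℝ, ∀ x : EuclideanSpace ℝ (Fin (n+1)), ‖x‖ ≤ C → |k x| ≤ B) :
    ∃ rt : ℝ, 0 < rt ∧
      ∀ (τ : ℕ → ℝ) (d : ℝ → EuclideanSpace ℝ (Fin l))
        (x : ℝ → EuclideanSpace ℝ (Fin (n+1))) (y : ℝ → ℝ),
        Sched rt τ → Measurable d → (∀ t : ℝ, d t ∈ D) →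
        Sol37 f g (ktilde k P p R K ω) τ d x y →
        qf P (x 0) < R ^ 2 →
        ∀ t : ℝ, 0 ≤ t → qf P (x t) < R ^ 2 :=
  lemma_3_3_general n l D hDc f g hfLip P hP p R K ω hK h33 k
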